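/- There exists a zero-dimensional scattered separable metrizable space that is σ-homogeneous (a countable union of homogeneous subspaces) but not ℓ-homogeneous for any finite ℓ; a witness is the ordinal ω^ω equipped with the order topology. -/

import Mathlib

open TopologicalSpace MeasureTheory Topology

/-- A space is *homogeneous* if its homeomorphism group acts transitively. -/
def HomogeneousSpace (X : Type*) [TopologicalSpace X] : Prop :=
  ∀ x y : X, ∃ h : X ≃ₜ X, h x = y

/-- A subset is a *homogeneous subspace* if it is homogeneous in the subspace topology. -/
def HomogeneousSubspace {X : Type*} [TopologicalSpace X] (S : Set X) : Prop :=
  ∀ x y : S, ∃ h : ↥S ≃ₜ ↥S, h x = y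

/-- A space is *zero-dimensional* if the clopen sets form a base. -/
def ZeroDimensionalSpace (X : Type*) [TopologicalSpace X] : Prop :=
  IsTopologicalBasis {s : Set X | IsClopen s}

/-- A space is *analytic* if it embeds onto an analytic subset of some Polish space. -/
def AnalyticSpace (X : Type*) [tX : TopologicalSpace X] : Prop :=
  ∃ (Z : Type) (tZ : TopologicalSpace Z), @PolishSpace Z tZ ∧
    ∃ j : X → Z, @IsEmbedding X Z tX tZ j ∧ @AnalyticSet Z tZ (Set.range j)

/-- A space is *coanalytic* if it embeds onto the complement of an analytic subset of some
Polish space. -/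
def CoanalyticSpace (X : Type*) [tX : TopologicalSpace X] : Prop :=
  ∃ (Z : Type) (tZ : TopologicalSpace Z), @PolishSpace Z tZ ∧
    ∃ j : X → Z, @IsEmbedding X Z tX tZ j ∧ @AnalyticSet Z tZ (Set.range j)ᶜ

/-- A space is *Borel* if it embeds onto a Borel subset of some Polish space. -/
def BorelSpacePaper (X : Type*) [tX : TopologicalSpace X] : Prop :=
  ∃ (Z : Type) (tZ : TopologicalSpace Z), @PolishSpace Z tZ ∧
    ∃ j : X → Z, @IsEmbedding X Z tX tZ j ∧ @MeasurableSet Z (@borel Z tZ) (Set.range j)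

/-- `A ∈ Σ¹₁(X)`: for some embedding `j` of `X` into a Polish space `Z`, `j '' A` is the
trace on `j '' X` of an analytic subset of `Z`. -/
def RelativelyAnalytic {X : Type*} [tX : TopologicalSpace X] (A : Set X) : Prop :=
  ∃ (Z : Type) (tZ : TopologicalSpace Z), @PolishSpace Z tZ ∧
    ∃ j : X → Z, @IsEmbedding X Z tX tZ j ∧
      ∃ A' : Set Z, @AnalyticSet Z tZ A' ∧ j '' A = A' ∩ Set.range j

/-- A subset of a space is `Σ¹₂` if it is a continuous image of a coanalytic subset of a
Polish space. -/
def Sigma12Set {Z : Type*} [tZ : TopologicalSpace Z] (s : Set Z) : Prop :=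
  ∃ (W : Type) (tW : TopologicalSpace W), @PolishSpace W tW ∧
    ∃ (C : Set W) (f : W → Z), @AnalyticSet W tW Cᶜ ∧ @ContinuousOn W Z tW tZ f C ∧ f '' C = s

/-- `A ∈ Δ¹₂(X)`: for some embedding `j` of `X` into a Polish space `Z`, both `j '' A` and
`j '' Aᶜ` are traces on `j '' X` of `Σ¹₂` subsets of `Z`. -/
def RelativelyDelta12 {X : Type*} [tX : TopologicalSpace X] (A : Set X) : Prop :=
  ∃ (Z : Type) (tZ : TopologicalSpace Z), @PolishSpace Z tZ ∧
    ∃ j : X → Z, @IsEmbedding X Z tX tZ j ∧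
      (∃ A' : Set Z, @Sigma12Set Z tZ A' ∧ j '' A = A' ∩ Set.range j) ∧
      (∃ B' : Set Z, @Sigma12Set Z tZ B' ∧ j '' Aᶜ = B' ∩ Set.range j)

/-- A space is *meager* if it is a meager subset of itself. -/
def MeagerSpace (X : Type*) [TopologicalSpace X] : Prop :=
  IsMeagre (Set.univ : Set X)

/-- A space is *Baire* if no non-empty open subset of it is meager (the definition used in
the paper). -/
def PaperBaireSpace (X : Type*) [TopologicalSpace X] : Prop :=
  ∀ U : Set X, IsOpen U → U.Nonempty → ¬ IsMeagre U

/-- A space is *nowhere countable* if it is non-empty and no non-empty open subset of it is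
countable. -/
def NowhereCountable (X : Type*) [TopologicalSpace X] : Prop :=
  Nonempty X ∧ ∀ U : Set X, IsOpen U → U.Nonempty → ¬ U.Countable

/-- The iterated Cantor–Bendixson derivative of a space: `cbDeriv X 0 = X`,
`cbDeriv X (ξ+1)` is `cbDeriv X ξ` minus its isolated points, and intersections are taken
at limit stages. -/
noncomputable def cbDeriv (X : Type*) [TopologicalSpace X] (o : Ordinal.{0}) : Set X :=
  Ordinal.limitRecOn o Set.univ
    (fun _ ih => {x ∈ ih | x ∈ closure (ih \ {x})})
    (fun o _ ih => ⋂ (p : Set.Iio o), ih p.1 p.2)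

/-- A space is *scattered* if some iterated Cantor–Bendixson derivative of it is empty. -/
def ScatteredSpace (X : Type*) [TopologicalSpace X] : Prop :=
  ∃ o : Ordinal.{0}, cbDeriv X o = ∅

/-- A space is *n-discrete* if it is the union of `n` discrete subspaces. -/
def NDiscrete (n : ℕ) (X : Type*) [TopologicalSpace X] : Prop :=
  ∃ D : Fin n → Set X, (∀ k, DiscreteTopology ↥(D k)) ∧ ⋃ k, D k = Set.univ

/-- A space is *n-homogeneous* if it is the union of `n` homogeneous subspaces. -/
def NHomogeneous (n : ℕ) (X : Type*) [TopologicalSpace X] : Prop :=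
  ∃ Y : Fin n → Set X, (∀ k, HomogeneousSubspace (Y k)) ∧ ⋃ k, Y k = Set.univ

/-- A space is *σ-homogeneous* if it is the union of countably many homogeneous
subspaces. -/
def SigmaHomogeneous (X : Type*) [TopologicalSpace X] : Prop :=
  ∃ Y : ℕ → Set X, (∀ n, HomogeneousSubspace (Y n)) ∧ ⋃ n, Y n = Set.univ

/-- An `Fσ` subset: a countable union of closed sets. -/
def IsFsigma {X : Type*} [TopologicalSpace X] (s : Set X) : Prop :=
  ∃ F : ℕ → Set X, (∀ n, IsClosed (F n)) ∧ s = ⋃ n, F n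

/-!
For `X = ω ^ ω` the Cantor–Bendixson derivatives are explicit: the `(n + 1)`-st one consists of
the nonzero multiples of `ω ^ (n + 1)`. Hence they vanish at stage `ω`, and the countably many
levels `X⁽ⁿ⁾ \ X⁽ⁿ⁺¹⁾`, being discrete, are homogeneous. Conversely, the least point of any
subspace of a well-order is isolated in it, so homogeneous subspaces of `X` are discrete; a union
of `ℓ` discrete subspaces has empty `ℓ`-th derivative, while `ω ^ ℓ` survives `ℓ` derivations.
Zero-dimensionality, separability and metrizability come from countability.
-/

open Set Filter Topology

section CantorBendixson

variable {X Y : Type*} [TopologicalSpace X] [TopologicalSpace Y]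

/-- The derived set of `S` within `S`: the successor step of `cbDeriv`. -/
def cbStep (S : Set X) : Set X := {x ∈ S | x ∈ closure (S \ {x})}

theorem cbStep_subset (S : Set X) : cbStep S ⊆ S := fun _ hx => hx.1

theorem cbStep_iterate_subset (S : Set X) (n : ℕ) : cbStep^[n] S ⊆ S := by
  induction n with
  | zero => exact subset_rfl
  | succ n ih =>
    rw [Function.iterate_succ_apply']
    exact (cbStep_subset _).trans ih

theorem cbStep_mono {S T : Set X} (h : S ⊆ T) : cbStep S ⊆ cbStep T :=
  fun _ hx => ⟨h hx.1, closure_mono (sdiff_subset_sdiff_left h) hx.2⟩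

theorem notMem_cbStep_of_isOpen {S U : Set X} {x : X} (hU : IsOpen U) (hxU : x ∈ U)
    (hUS : U ∩ S ⊆ {x}) : x ∉ cbStep S := fun ⟨_, hx⟩ =>
  have ⟨_, hyU, hyS, hyx⟩ := mem_closure_iff.mp hx U hU hxU
  hyx (hUS ⟨hyU, hyS⟩)

theorem cbStep_eq_empty_iff {S : Set X} : cbStep S = ∅ ↔ DiscreteTopology S := by
  simp only [discreteTopology_subtype_iff, eq_empty_iff_forall_notMem, cbStep, mem_ofPred_eq,
    not_and, mem_closure_iff_nhdsWithin_neBot, not_neBot, nhdsWithin, sdiff_eq, inf_assoc,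
    inf_principal, inter_comm]

theorem Set.Subsingleton.cbStep_eq_empty {S : Set X} (hS : S.Subsingleton) : cbStep S = ∅ :=
  cbStep_eq_empty_iff.mpr (hS.coe_sort.discreteTopology)

theorem cbStep_diff_cbStep (S : Set X) : cbStep (S \ cbStep S) = ∅ :=
  eq_empty_of_subset_empty fun _ hx => (cbStep_subset _ hx).2 (cbStep_mono sdiff_subset hx)

theorem cbStep_inter_isOpen (S : Set X) {U : Set X} (hU : IsOpen U) :
    cbStep (S ∩ U) = cbStep S ∩ U := by
  ext x
  refine ⟨fun hx => ⟨cbStep_mono inter_subset_left hx, hx.1.2⟩, fun ⟨⟨hxS, hx⟩, hxU⟩ => ?_⟩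
  refine ⟨⟨hxS, hxU⟩, closure_mono ?_ (hU.inter_closure ⟨hxU, hx⟩)⟩
  rintro y ⟨hyU, hyS, hyx⟩
  exact ⟨⟨hyS, hyU⟩, hyx⟩

theorem cbStep_diff_singleton [T1Space X] (S : Set X) (a : X) :
    cbStep (S \ {a}) = cbStep S \ {a} := by
  ext x
  refine ⟨fun hx => ⟨cbStep_mono sdiff_subset hx, hx.1.2⟩, fun ⟨⟨hxS, hx⟩, hxa⟩ => ?_⟩
  refine ⟨⟨hxS, hxa⟩, ?_⟩
  have hsub : S \ {x} ⊆ (S \ {a}) \ {x} ∪ {a} := by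
    rintro z ⟨hzS, hzx⟩
    by_cases hza : z = a
    · exact Or.inr hza
    · exact Or.inl ⟨⟨hzS, hza⟩, hzx⟩
  have := closure_mono hsub hx
  rw [closure_union, closure_singleton] at this
  exact this.resolve_right hxa

theorem cbStep_iterate_inter_isOpen (S : Set X) {U : Set X} (hU : IsOpen U) (n : ℕ) :
    cbStep^[n] (S ∩ U) = cbStep^[n] S ∩ U :=
  (Function.Semiconj.iterate_right (f := (· ∩ U)) (fun T => (cbStep_inter_isOpen T hU).symm)
    n S).symm

theorem cbStep_iterate_diff_singleton [T1Space X] (S : Set X) (a : X) (n : ℕ) :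
    cbStep^[n] (S \ {a}) = cbStep^[n] S \ {a} :=
  (Function.Semiconj.iterate_right (f := (· \ {a})) (fun T => (cbStep_diff_singleton T a).symm)
    n S).symm

theorem Topology.IsOpenEmbedding.cbStep_preimage {f : X → Y} (hf : IsOpenEmbedding f)
    (S : Set Y) : cbStep (f ⁻¹' S) = f ⁻¹' cbStep S := by
  ext x
  have hx : f ⁻¹' S \ {x} = f ⁻¹' (S \ {f x}) := by
    rw [preimage_sdiff, ← image_singleton, hf.injective.preimage_image]
  simp only [cbStep, mem_ofPred_eq, mem_preimage, hx,
    ← hf.isOpenMap.preimage_closure_eq_closure_preimage hf.continuous]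

theorem Topology.IsOpenEmbedding.cbStep_iterate_preimage {f : X → Y} (hf : IsOpenEmbedding f)
    (S : Set Y) (n : ℕ) : cbStep^[n] (f ⁻¹' S) = f ⁻¹' cbStep^[n] S :=
  (Function.Semiconj.iterate_right (f := (f ⁻¹' ·)) (fun T => (hf.cbStep_preimage T).symm)
    n S).symm

theorem cbStep_iterate_eq_empty_of_subset_iUnion [T1Space X] {m : ℕ} {C : Set X}
    (D : Fin m → Set X) (hD : ∀ k, DiscreteTopology (D k)) (hC : C ⊆ ⋃ k, D k) :
    cbStep^[m] C = ∅ := by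
  induction m generalizing C with
  | zero => simpa using hC
  | succ m ih =>
    refine eq_empty_of_forall_notMem fun x hx => ?_
    obtain ⟨i, hxi⟩ := mem_iUnion.mp (hC (cbStep_iterate_subset C _ hx))
    -- `U` is a neighbourhood of `x` meeting `D i` only in `x`
    set U := (closure (D i \ {x}))ᶜ
    have hU : IsOpen U := isClosed_closure.isOpen_compl
    have hxU : x ∈ U := fun h => (cbStep_eq_empty_iff.mpr (hD i)).subset ⟨hxi, h⟩
    have hCU : (C ∩ U) \ {x} ⊆ ⋃ k, D (i.succAbove k) := by
      rintro y ⟨⟨hyC, hyU⟩, hyx⟩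
      obtain ⟨j, hyj⟩ := mem_iUnion.mp (hC hyC)
      obtain ⟨k, rfl⟩ := Fin.exists_succAbove_eq (y := i) (x := j) fun hji =>
        hyU (subset_closure ⟨hji ▸ hyj, hyx⟩)
      exact mem_iUnion.mpr ⟨k, hyj⟩
    have hsub : (cbStep^[m] (C ∩ U)).Subsingleton := by
      have := ih (fun k => D (i.succAbove k)) (fun k => hD _) hCU
      rw [cbStep_iterate_diff_singleton, sdiff_eq_empty] at this
      exact subsingleton_singleton.anti this
    have : x ∈ cbStep^[m + 1] (C ∩ U) := by
      rw [cbStep_iterate_inter_isOpen C hU]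
      exact ⟨hx, hxU⟩
    rw [Function.iterate_succ_apply', hsub.cbStep_eq_empty] at this
    exact this

theorem cbDeriv_natCast (n : ℕ) : cbDeriv X n = cbStep^[n] univ := by
  induction n with
  | zero => exact Ordinal.limitRecOn_zero _ _ _
  | succ n ih =>
    rw [Nat.cast_succ, Function.iterate_succ_apply', ← ih]
    exact Ordinal.limitRecOn_add_one _ _ _ _

theorem cbDeriv_omega0 : cbDeriv X Ordinal.omega0 = ⋂ n : ℕ, cbStep^[n] univ := by
  rw [cbDeriv, Ordinal.limitRecOn_limit _ _ _ _ Ordinal.isSuccLimit_omega0]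
  ext x
  simp only [mem_iInter, ← cbDeriv_natCast]
  refine ⟨fun h n => h ⟨n, Ordinal.natCast_lt_omega0 n⟩, fun h ⟨o, ho⟩ => ?_⟩
  obtain ⟨n, rfl⟩ := Ordinal.lt_omega0.mp ho
  exact h n

end CantorBendixson

section Homogeneity

variable {X : Type*} [TopologicalSpace X]

theorem homogeneousSpace_of_discreteTopology [DiscreteTopology X] : HomogeneousSpace X := by
  classical
  exact fun x y => ⟨(Equiv.swap x y).toHomeomorphOfDiscrete, Equiv.swap_apply_left x y⟩

theorem HomogeneousSpace.discreteTopology (h : HomogeneousSpace X) {x : X} (hx : IsOpen {x}) :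
    DiscreteTopology X := by
  refine discreteTopology_iff_isOpen_singleton.mpr fun y => ?_
  obtain ⟨f, rfl⟩ := h x y
  simpa using f.isOpen_image.mpr hx

theorem HomogeneousSubspace.discreteTopology_of_wellFoundedLT [LinearOrder X] [WellFoundedLT X]
    (hIic : ∀ x : X, IsOpen (Iic x)) {S : Set X} (hS : HomogeneousSubspace S) :
    DiscreteTopology S := by
  rcases S.eq_empty_or_nonempty with rfl | hne
  · exact Subsingleton.discreteTopology
  obtain ⟨m, hmS, hmin⟩ := wellFounded_lt.has_min S hne
  -- the least point of `S` is isolated in `S`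
  refine HomogeneousSpace.discreteTopology hS (x := ⟨m, hmS⟩) ?_
  convert (hIic m).preimage continuous_subtype_val
  ext ⟨y, hyS⟩
  simpa [Subtype.ext_iff] using ⟨fun h => h.le, fun h => h.antisymm (not_lt.mp (hmin y hyS))⟩

theorem sigmaHomogeneous_of_iInter_cbStep_iterate_eq_empty
    (h : ⋂ n : ℕ, cbStep^[n] (univ : Set X) = ∅) : SigmaHomogeneous X := by
  refine ⟨fun n => cbStep^[n] univ \ cbStep^[n + 1] univ, fun n => ?_, ?_⟩
  · have : DiscreteTopology ↥(cbStep^[n] univ \ cbStep^[n + 1] (univ : Set X)) := by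
      rw [← cbStep_eq_empty_iff, Function.iterate_succ_apply']
      exact cbStep_diff_cbStep _
    exact homogeneousSpace_of_discreteTopology
  · classical
    refine eq_univ_of_forall fun x => ?_
    have hx : ∃ n, x ∉ cbStep^[n] (univ : Set X) := by
      simpa only [mem_iInter, not_forall] using h.subset.mt (notMem_empty x)
    obtain ⟨n, hn⟩ : ∃ n, Nat.find hx = n + 1 :=
      Nat.exists_eq_succ_of_ne_zero fun h0 => by simpa [h0] using Nat.find_spec hx
    refine mem_iUnion.mpr ⟨n, not_not.mp (Nat.find_min hx (hn ▸ n.lt_succ_self)), ?_⟩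
    exact hn ▸ Nat.find_spec hx

theorem NHomogeneous.cbStep_iterate_univ_eq_empty [T1Space X] {n : ℕ}
    (hdisc : ∀ S : Set X, HomogeneousSubspace S → DiscreteTopology S) (h : NHomogeneous n X) :
    cbStep^[n] (univ : Set X) = ∅ := by
  obtain ⟨Y, hY, hcov⟩ := h
  exact cbStep_iterate_eq_empty_of_subset_iUnion Y (fun k => hdisc _ (hY k)) hcov.ge

theorem zeroDimensionalSpace_of_countable [CompletelyRegularSpace X] [Countable X] :
    ZeroDimensionalSpace X :=
  CompletelyRegularSpace.isTopologicalBasis_clopens_of_cardinalMk_lt_continuum <|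
    (Cardinal.mk_le_aleph0_iff.mpr inferInstance).trans_lt Cardinal.aleph0_lt_continuum

end Homogeneity

namespace Ordinal

open Order

universe u

theorem cbStep_setOf_dvd (b : Ordinal.{u}) : cbStep {x | b ∣ x} = {x | b * ω ∣ x} \ {0} := by
  ext x
  constructor
  · intro hx
    have hx0 : x ≠ 0 := by
      rintro rfl
      exact notMem_cbStep_of_isOpen (SuccOrder.isOpen_singleton_iff.mpr not_isSuccLimit_zero)
        rfl inter_subset_left hx
    obtain ⟨c, rfl⟩ := hx.1
    have hb : 0 < b := pos_iff_ne_zero.mpr (left_ne_zero_of_mul hx0)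
    refine ⟨?_, hx0⟩
    rcases zero_or_succ_or_isSuccLimit c with rfl | ⟨d, rfl⟩ | hc
    · simp at hx0
    · -- `b * succ d` is the only multiple of `b` in `(b * d, b * succ d]`
      refine (notMem_cbStep_of_isOpen (U := Ioo (b * d) (succ (b * succ d))) isOpen_Ioo
        ⟨(mul_lt_mul_iff_right₀ hb).mpr (lt_succ d), lt_succ _⟩ ?_ hx).elim
      rintro _ ⟨⟨hlo, hhi⟩, e, rfl⟩
      have hde : d < e := (mul_lt_mul_iff_right₀ hb).mp hlo
      have hed : e ≤ succ d := (mul_le_mul_iff_right₀ hb).mp (lt_succ_iff.mp hhi)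
      rw [hed.antisymm (succ_le_of_lt hde)]
      rfl
    · exact mul_dvd_mul_left b (isSuccPrelimit_iff_omega0_dvd.mp hc.isSuccPrelimit)
  · rintro ⟨⟨c, rfl⟩, hx0⟩
    have hb : 0 < b := pos_iff_ne_zero.mpr (left_ne_zero_of_mul (left_ne_zero_of_mul hx0))
    have hc : IsSuccLimit (ω * c) := isSuccLimit_iff.mpr
      ⟨mul_ne_zero omega0_ne_zero (right_ne_zero_of_mul hx0),
        isSuccPrelimit_iff_omega0_dvd.mpr (dvd_mul_right ω c)⟩
    rw [mul_assoc] at hx0 ⊢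
    refine ⟨dvd_mul_right b _, mem_closure_iff.mpr fun U hU hxU => ?_⟩
    -- `b * (ω * c)` is a limit of the smaller multiples `b * c'`, `c' < ω * c`
    obtain ⟨a, ha, haU⟩ := SuccOrder.isOpen_iff.mp hU _ hxU (isSuccLimit_mul_right hb hc)
    obtain ⟨c', hc', hac'⟩ := (lt_mul_iff_of_isSuccLimit hc).mp ha
    have hlt : b * c' < b * (ω * c) := (mul_lt_mul_iff_right₀ hb).mpr hc'
    exact ⟨b * c', haU ⟨hac', hlt⟩, dvd_mul_right b c', hlt.ne⟩

theorem cbStep_iterate_succ_univ (n : ℕ) :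
    cbStep^[n + 1] (Set.univ : Set Ordinal.{u}) = {x | ω ^ (n + 1) ∣ x} \ {0} := by
  induction n with
  | zero => simpa using cbStep_setOf_dvd 1
  | succ n ih =>
    rw [Function.iterate_succ_apply', ih, cbStep_diff_singleton, cbStep_setOf_dvd, ← pow_succ,
      sdiff_idem]

theorem cbStep_iterate_succ_univ_Iio (o : Ordinal.{u}) (n : ℕ) :
    cbStep^[n + 1] (Set.univ : Set (Iio o)) = Subtype.val ⁻¹' ({x | ω ^ (n + 1) ∣ x} \ {0}) := by
  rw [← cbStep_iterate_succ_univ, ← isOpen_Iio.isOpenEmbedding_subtypeVal.cbStep_iterate_preimage,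
    preimage_univ]

theorem isOpen_Iic_Iio {o : Ordinal.{u}} (x : Iio o) : IsOpen (Iic x) := by
  convert (isOpen_Iio (a := succ x.1)).preimage continuous_subtype_val
  ext
  simp [Subtype.coe_le_coe]

instance countable_Iio_omega0_opow_omega0 : Countable (Iio (ω ^ ω : Ordinal.{u})) := by
  rw [← Cardinal.mk_le_aleph0_iff, Cardinal.mk_Iio_ordinal, card_omega0_opow omega0_ne_zero,
    card_omega0, max_self, Cardinal.lift_aleph0]

theorem iInter_cbStep_iterate_univ_Iio_omega0_opow_omega0 :
    ⋂ n : ℕ, cbStep^[n] (Set.univ : Set (Iio (ω ^ ω : Ordinal.{u}))) = ∅ := by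
  refine eq_empty_of_forall_notMem fun x hx => ?_
  obtain ⟨_, hn, hxn⟩ := (lt_opow_of_isSuccLimit omega0_ne_zero isSuccLimit_omega0).mp x.2
  obtain ⟨n, rfl⟩ := lt_omega0.mp hn
  have ⟨hdvd, hx0⟩ := (cbStep_iterate_succ_univ_Iio _ n).subset (mem_iInter.mp hx (n + 1))
  rw [opow_natCast] at hxn
  exact (le_of_dvd hx0 ((pow_dvd_pow ω n.le_succ).trans hdvd)).not_gt hxn

theorem cbStep_iterate_univ_Iio_omega0_opow_omega0_nonempty (n : ℕ) :
    (cbStep^[n] (Set.univ : Set (Iio (ω ^ ω : Ordinal.{u})))).Nonempty := by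
  have hlt : ω ^ n < (ω ^ ω : Ordinal.{u}) := by
    rw [← opow_natCast, opow_lt_opow_iff_right one_lt_omega0]
    exact natCast_lt_omega0 n
  cases n with
  | zero => exact ⟨⟨ω ^ 0, hlt⟩, trivial⟩
  | succ n =>
    rw [cbStep_iterate_succ_univ_Iio]
    exact ⟨⟨ω ^ (n + 1), hlt⟩, dvd_rfl, pow_ne_zero _ omega0_ne_zero⟩

end Ordinal

/-- The ordinal `ω ^ ω` with the order topology is a zero-dimensional scattered separable
metrizable space that is σ-homogeneous but not `ℓ`-homogeneous for any finite `ℓ`. -/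
theorem omega_pow_omega_sigma_homogeneous_not_finitely_homogeneous :
    ZeroDimensionalSpace ↥(Set.Iio (Ordinal.omega0 ^ Ordinal.omega0)) ∧
    ScatteredSpace ↥(Set.Iio (Ordinal.omega0 ^ Ordinal.omega0)) ∧
    SeparableSpace ↥(Set.Iio (Ordinal.omega0 ^ Ordinal.omega0)) ∧
    MetrizableSpace ↥(Set.Iio (Ordinal.omega0 ^ Ordinal.omega0)) ∧
    SigmaHomogeneous ↥(Set.Iio (Ordinal.omega0 ^ Ordinal.omega0)) ∧
    ∀ ℓ : ℕ, ¬ NHomogeneous ℓ ↥(Set.Iio (Ordinal.omega0 ^ Ordinal.omega0)) := by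
  refine ⟨zeroDimensionalSpace_of_countable, ⟨Ordinal.omega0, ?_⟩, inferInstance, inferInstance,
    sigmaHomogeneous_of_iInter_cbStep_iterate_eq_empty
      Ordinal.iInter_cbStep_iterate_univ_Iio_omega0_opow_omega0, fun ℓ h => ?_⟩
  · rw [cbDeriv_omega0, Ordinal.iInter_cbStep_iterate_univ_Iio_omega0_opow_omega0]
  · exact (Ordinal.cbStep_iterate_univ_Iio_omega0_opow_omega0_nonempty ℓ).ne_empty
      (h.cbStep_iterate_univ_eq_empty fun _ hS =>
        hS.discreteTopology_of_wellFoundedLT Ordinal.isOpen_Iic_Iio)
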